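/- arXiv:1909.07313 — 2 statements merged into one kernel-verified Lean document; each statement's English description precedes it below -/
import Mathlib

section
/- Let B be a finite list of bids on n goods and p ∈ ℝ^n. Suppose B is δ-valid at p for some δ > 0, and suppose every bid in B either demands all goods {0,1,…,n} at p or has surplus gap at least ε > 0 at p. Then B is ε/2-valid at p; that is, the indirect utility function f_B is convex on the open ball {q ∈ ℝ^n : ‖q − p‖_∞ < ε/2}. -/
open Finset

noncomputable section

variable {n : ℕ}

/-- Extend a value/price vector in `ℝ^n` by a 0-th coordinate (the reject good) equal to 0. -/
def extVec (b : Fin n → ℝ) : Fin (n + 1) → ℝ := Fin.cons 0 b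

/-- Surplus of good `i` (in `{0,…,n}`) for value vector `b` at price `p`. -/
def surplus (b p : Fin n → ℝ) (i : Fin (n + 1)) : ℝ := extVec b i - extVec p i

/-- Maximal surplus over all goods (including the reject good). -/
def maxSurplus (b p : Fin n → ℝ) : ℝ :=
  Finset.univ.sup' Finset.univ_nonempty (surplus b p)

/-- The bid with value vector `b` demands good `i` at price `p`. -/
def Demands (b p : Fin n → ℝ) (i : Fin (n + 1)) : Prop :=
  ∀ j, surplus b p j ≤ surplus b p i

open Classical in
/-- The set of goods demanded by value vector `b` at price `p`. -/
def demandedSet (b p : Fin n → ℝ) : Finset (Fin (n + 1)) :=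
  Finset.univ.filter fun i => Demands b p i

/-- Indirect utility function of a bid list (bids are pairs of value vector and weight). -/
def indirectUtility (B : List ((Fin n → ℝ) × ℝ)) (p : Fin n → ℝ) : ℝ :=
  (B.map fun bw => bw.2 * maxSurplus bw.1 p).sum

/-- Surplus gap of the bid `b` at `p`: maximal surplus minus the best surplus on
a non-demanded good (junk value when every good is demanded). -/
def surplusGap (b p : Fin n → ℝ) : ℝ :=
  maxSurplus b p - sSup (surplus b p '' {i | i ∉ demandedSet b p})

/-- `B` is `ε`-valid at `p` if its indirect utility function is convex on the open
`L∞`-ball of radius `ε` around `p`. -/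
def epsValid (B : List ((Fin n → ℝ) × ℝ)) (p : Fin n → ℝ) (ε : ℝ) : Prop :=
  ConvexOn ℝ {q : Fin n → ℝ | ‖q - p‖ < ε} (indirectUtility B)

open Classical in
/-- Sum of the weights of bids in `B` that are marginal on both `i` and `i'` at `p`. -/
def marginalWeight (B : List ((Fin n → ℝ) × ℝ)) (p : Fin n → ℝ) (i i' : Fin (n + 1)) : ℝ :=
  (B.map fun bw => if Demands bw.1 p i ∧ Demands bw.1 p i' then bw.2 else 0).sum


lemma extVec_add (a b : Fin n → ℝ) : extVec (a + b) = extVec a + extVec b := by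
  funext i; refine Fin.cases ?_ ?_ i <;> simp [extVec]

lemma extVec_smul (c : ℝ) (v : Fin n → ℝ) : extVec (c • v) = c • extVec v := by
  funext i; refine Fin.cases ?_ ?_ i <;> simp [extVec]

lemma abs_extVec_le (v : Fin n → ℝ) (i : Fin (n+1)) : |extVec v i| ≤ ‖v‖ := by
  refine Fin.cases ?_ ?_ i
  · simp [extVec, norm_nonneg]
  · intro j; simpa [extVec, Real.norm_eq_abs] using norm_le_pi_norm v j

lemma demandedSet_nonempty (b p : Fin n → ℝ) : (demandedSet b p).Nonempty := by
  obtain ⟨i, -, hi⟩ := Finset.exists_mem_eq_sup' (Finset.univ_nonempty) (surplus b p)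
  refine ⟨i, ?_⟩
  simp only [demandedSet, Finset.mem_filter, Finset.mem_univ, true_and]
  intro j
  rw [← hi]
  exact Finset.le_sup' _ (Finset.mem_univ j)

lemma surplus_eq_max_of_mem {b p : Fin n → ℝ} {i : Fin (n+1)}
    (hi : i ∈ demandedSet b p) : surplus b p i = maxSurplus b p := by
  simp only [demandedSet, Finset.mem_filter] at hi
  exact le_antisymm (Finset.le_sup' _ (Finset.mem_univ i))
    (Finset.sup'_le _ _ fun j _ => hi.2 j)

lemma surplus_le_of_not_mem {b p : Fin n → ℝ} {ε : ℝ} (hgap : ε ≤ surplusGap b p)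
    {i : Fin (n+1)} (hi : i ∉ demandedSet b p) : surplus b p i ≤ maxSurplus b p - ε := by
  have h1 : surplus b p i ≤ sSup (surplus b p '' {j | j ∉ demandedSet b p}) := by
    apply le_csSup
    · exact Set.Finite.bddAbove (Set.Finite.image _ (Set.toFinite _))
    · exact ⟨i, hi, rfl⟩
  have h2 := hgap
  unfold surplusGap at h2
  linarith

lemma maxSurplus_shift {b p : Fin n → ℝ} {ε : ℝ}
    (hb : demandedSet b p = Finset.univ ∨ ε ≤ surplusGap b p)
    {v : Fin n → ℝ} (hv : ‖v‖ < ε / 2) :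
    maxSurplus b (p + v) = maxSurplus b p +
      (demandedSet b p).sup' (demandedSet_nonempty b p) (fun i => - extVec v i) := by
  have hsur : ∀ i, surplus b (p + v) i = surplus b p i - extVec v i := by
    intro i; simp only [surplus, extVec_add, Pi.add_apply]; ring
  have key : maxSurplus b (p+v)
      = (demandedSet b p).sup' (demandedSet_nonempty b p)
          (fun i => surplus b p i - extVec v i) := by
    unfold maxSurplus
    apply le_antisymm
    · apply Finset.sup'_le
      intro i _
      rw [hsur]
      by_cases hi : i ∈ demandedSet b p
      · exact Finset.le_sup' (fun i => surplus b p i - extVec v i) hi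
      · rcases hb with hb | hb
        · exact absurd (hb ▸ Finset.mem_univ i) hi
        · obtain ⟨j, hj⟩ := demandedSet_nonempty b p
          have h1 := surplus_le_of_not_mem hb hi
          have h2 := abs_le.mp (abs_extVec_le v i)
          have h3 := abs_le.mp (abs_extVec_le v j)
          have h4 := surplus_eq_max_of_mem hj
          have h5 : surplus b p i - extVec v i ≤ surplus b p j - extVec v j := by
            linarith
          exact h5.trans (Finset.le_sup' (fun i => surplus b p i - extVec v i) hj)
    · apply Finset.sup'_le
      intro i hi
      rw [← hsur]
      exact Finset.le_sup' _ (Finset.mem_univ i)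
  rw [key]
  have hc : ∀ i ∈ demandedSet b p,
      surplus b p i - extVec v i = maxSurplus b p + (- extVec v i) := by
    intro i hi; rw [surplus_eq_max_of_mem hi]; ring
  rw [Finset.sup'_congr _ rfl hc]
  exact Finset.comp_sup'_eq_sup'_comp _ (fun x => maxSurplus b p + x)
    (fun x y => by simp [max_add_add_left]) |>.symm ▸ rfl

/-- If the bid list `B` is `δ`-valid at `p` for some `δ > 0` and every bid in
`B` either demands all goods `{0,…,n}` at `p` or has surplus gap at least `ε > 0` at `p`,
then `B` is `ε/2`-valid at `p`: the indirect utility function `f_B` is convex on the open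
`L∞`-ball of radius `ε/2` around `p`. -/
theorem stmt4 (n : ℕ) (hn : 1 ≤ n) (B : List ((Fin n → ℝ) × ℝ))
    (hw : ∀ bw ∈ B, bw.2 = 1 ∨ bw.2 = -1)
    (p : Fin n → ℝ) (δ ε : ℝ) (hδ : 0 < δ) (hε : 0 < ε)
    (hvalid : epsValid B p δ)
    (hbids : ∀ bw ∈ B, demandedSet bw.1 p = Finset.univ ∨ ε ≤ surplusGap bw.1 p) :
    epsValid B p (ε / 2) := by
  classical
  set G : (Fin n → ℝ) → ℝ := fun v =>
    (B.map fun bw => bw.2 * (demandedSet bw.1 p).sup' (demandedSet_nonempty bw.1 p)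
      (fun i => - extVec v i)).sum with hG
  have hkey : ∀ v : Fin n → ℝ, ‖v‖ < ε / 2 →
      indirectUtility B (p + v) = indirectUtility B p + G v := by
    intro v hv
    unfold indirectUtility
    rw [hG, ← List.sum_map_add]
    refine congrArg List.sum (List.map_congr_left ?_)
    intro bw hbw
    rw [maxSurplus_shift (hbids bw hbw) hv, mul_add]
  have hhom : ∀ c : ℝ, 0 ≤ c → ∀ v, G (c • v) = c * G v := by
    intro c hc v
    rw [hG]
    simp only
    rw [← List.sum_map_mul_left]
    refine congrArg List.sum (List.map_congr_left ?_)
    intro bw _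
    have h2 := Finset.comp_sup'_eq_sup'_comp (demandedSet_nonempty bw.1 p)
      (f := fun i => - extVec v i) (fun x => c * x)
      (fun x y => mul_max_of_nonneg _ _ hc)
    simp only [Function.comp_def] at h2
    have h4 : (fun i : Fin (n+1) => -extVec (c • v) i) = fun i => c * -extVec v i := by
      funext i; rw [extVec_smul]; simp
    have h3 : (demandedSet bw.1 p).sup' (demandedSet_nonempty bw.1 p)
        (fun i => - extVec (c • v) i)
        = c * (demandedSet bw.1 p).sup' (demandedSet_nonempty bw.1 p)
        (fun i => - extVec v i) := by
      rw [h4, ← h2]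
    rw [h3]; ring
  set r := min δ (ε/2) with hr
  have hrpos : 0 < r := lt_min hδ (by linarith)
  have hnormcomb : ∀ (v w : Fin n → ℝ) (a b s : ℝ), 0 ≤ a → 0 ≤ b → a + b = 1 →
      ‖v‖ < s → ‖w‖ < s → ‖a • v + b • w‖ < s := by
    intro v w a b s ha hb hab hv hw
    calc ‖a•v+b•w‖ ≤ ‖a•v‖+‖b•w‖ := norm_add_le _ _
      _ = a*‖v‖ + b*‖w‖ := by
          rw [norm_smul, norm_smul, Real.norm_eq_abs, Real.norm_eq_abs,
            abs_of_nonneg ha, abs_of_nonneg hb]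
      _ < s := by
          rcases eq_or_lt_of_le ha with h|h
          · have hb1 : b = 1 := by linarith
            rw [← h, hb1]; simpa using hw
          · have hs : a * s + b * s = s := by rw [← add_mul, hab, one_mul]
            linarith [mul_lt_mul_of_pos_left hv h, mul_le_mul_of_nonneg_left hw.le hb]
  have hG0 : ∀ v w : Fin n → ℝ, ∀ a b : ℝ, ‖v‖ < r → ‖w‖ < r → 0 ≤ a → 0 ≤ b → a + b = 1 →
      G (a • v + b • w) ≤ a * G v + b * G w := by
    intro v w a b hv hw ha hb hab
    have hvε : ‖v‖ < ε/2 := hv.trans_le (min_le_right _ _)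
    have hwε : ‖w‖ < ε/2 := hw.trans_le (min_le_right _ _)
    have hcomb : ‖a • v + b • w‖ < ε/2 := hnormcomb v w a b _ ha hb hab hvε hwε
    have hmem1 : p + v ∈ {q : Fin n → ℝ | ‖q - p‖ < δ} := by
      simp only [Set.mem_setOf_eq, add_sub_cancel_left]
      exact hv.trans_le (min_le_left _ _)
    have hmem2 : p + w ∈ {q : Fin n → ℝ | ‖q - p‖ < δ} := by
      simp only [Set.mem_setOf_eq, add_sub_cancel_left]
      exact hw.trans_le (min_le_left _ _)
    have hineq := hvalid.2 hmem1 hmem2 ha hb hab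
    have heq : a • (p + v) + b • (p + w) = p + (a • v + b • w) := by
      funext i
      simp only [Pi.add_apply, Pi.smul_apply, smul_eq_mul]
      linear_combination p i * hab
    rw [heq, smul_eq_mul, smul_eq_mul, hkey _ hcomb, hkey _ hvε, hkey _ hwε] at hineq
    have hf : a * indirectUtility B p + b * indirectUtility B p = indirectUtility B p := by
      rw [← add_mul, hab, one_mul]
    linarith [hineq, hf]
  have hGconv : ∀ v w : Fin n → ℝ, ∀ a b : ℝ, 0 ≤ a → 0 ≤ b → a + b = 1 →
      G (a • v + b • w) ≤ a * G v + b * G w := by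
    intro v w a b ha hb hab
    set t := r / (1 + ‖v‖ + ‖w‖) with ht
    have hden : (0:ℝ) < 1 + ‖v‖ + ‖w‖ := by positivity
    have htpos : 0 < t := div_pos hrpos hden
    have htv : ‖t • v‖ < r := by
      rw [norm_smul, Real.norm_eq_abs, abs_of_pos htpos, ht, div_mul_eq_mul_div,
        div_lt_iff₀ hden]
      nlinarith [norm_nonneg v, norm_nonneg w]
    have htw : ‖t • w‖ < r := by
      rw [norm_smul, Real.norm_eq_abs, abs_of_pos htpos, ht, div_mul_eq_mul_div,
        div_lt_iff₀ hden]
      nlinarith [norm_nonneg v, norm_nonneg w]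
    have h1 := hG0 (t•v) (t•w) a b htv htw ha hb hab
    have h2 : a • (t•v) + b • (t•w) = t • (a•v+b•w) := by module
    rw [h2, hhom t htpos.le, hhom t htpos.le, hhom t htpos.le] at h1
    have h3 : t * (a * G v + b * G w) = a * (t * G v) + b * (t * G w) := by ring
    rw [← h3] at h1
    exact le_of_mul_le_mul_left h1 htpos
  constructor
  · have hset : {q : Fin n → ℝ | ‖q - p‖ < ε/2} = Metric.ball p (ε/2) := by
      ext q; simp [Metric.mem_ball, dist_eq_norm]
    rw [hset]; exact convex_ball p (ε/2)
  · intro x hx y hy a b ha hb hab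
    simp only [Set.mem_setOf_eq] at hx hy
    have hxy : a • x + b • y = p + (a • (x - p) + b • (y - p)) := by
      funext i
      simp only [Pi.add_apply, Pi.smul_apply, Pi.sub_apply, smul_eq_mul]
      linear_combination p i * hab
    have hcomb : ‖a • (x-p) + b • (y-p)‖ < ε/2 := hnormcomb _ _ a b _ ha hb hab hx hy
    have hkx := hkey (x - p) hx
    rw [show p + (x - p) = x by abel] at hkx
    have hky := hkey (y - p) hy
    rw [show p + (y - p) = y by abel] at hky
    calc indirectUtility B (a•x+b•y)
        = indirectUtility B p + G (a•(x-p)+b•(y-p)) := by rw [hxy, hkey _ hcomb]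
      _ ≤ indirectUtility B p + (a * G (x-p) + b * G (y-p)) := by
          linarith [hGconv (x-p) (y-p) a b ha hb hab]
      _ = a • indirectUtility B x + b • indirectUtility B y := by
          rw [smul_eq_mul, smul_eq_mul, hkx, hky]
          linear_combination (-(indirectUtility B p)) * hab

end
end

section
/- Let B be a finite list of bids on n goods whose indirect utility function f_B is convex on ℝ^n, let t ∈ ℤ^n, and define g(p) := f_B(p) + t·p and, for p ∈ ℤ^n and S ⊆ {1,…,n}, the slope g'(p; S) := g(p + e^S) − g(p), where e^S is the 0/1 indicator vector of S. Let p ∈ ℤ^n and suppose S_0 ⊆ {1,…,n} is a minimiser of S ↦ g'(p; S) that is contained in every minimiser of this map. Let λ ≥ 1 be an integer with g'(p + (λ−1)·e^{S_0}; S_0) = g'(p; S_0). Then S_0 is a minimiser of S ↦ g'(p + (λ−1)·e^{S_0}; S) and is contained in every minimiser of that map; that is, S_0 is also the inclusion-wise minimal steepest descent direction at p + (λ−1)·e^{S_0}. -/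
/-!
Along the direction `e^{S₀}` the Lyapunov function is convex, so the slopes
`g'(p + k e^{S₀}; S₀)` are nondecreasing in `k`; being equal at `k = 0` and `k = λ - 1`, they are
constant in between. Minimality of `S₀` then propagates one step at a time through the inequality
`g(p + e^{S ∪ T}) + g(p + e^{S ∩ T}) ≤ g(p + e^S + e^T) + g(p)`.

That inequality is where the bid structure enters. With `P = (S ∪ T) \ (S ∩ T)` and `Q = S ∩ T`,
each bid contributes `max(a, b - s, c - σ)` to `f_B(x + s e^P + σ e^Q)`, so between two consecutive
kink lines `σ - s = const` the function splits as `X s + Y σ`. Convexity of `f_B` in `σ` makes the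
increments of `Y` nondecreasing there, which is the inequality restricted to that strip; the strips
are then chained together.
-/

open Finset

noncomputable section

variable {n : ℕ}

/-- The Lyapunov function `g(p) = f_B(p) + t·p` evaluated at an integer price vector. -/
def lyapunov (B : List ((Fin n → ℝ) × ℝ)) (t : Fin n → ℤ) (p : Fin n → ℤ) : ℝ :=
  indirectUtility B (fun i => (p i : ℝ)) + ∑ i, (t i : ℝ) * (p i : ℝ)

/-- The descSlope `g'(p; S) = g(p + e^S) − g(p)` of the Lyapunov function at an integer price
vector `p` in direction `e^S`. -/
def descSlope (B : List ((Fin n → ℝ) × ℝ)) (t : Fin n → ℤ) (p : Fin n → ℤ)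
    (S : Finset (Fin n)) : ℝ :=
  lyapunov B t (fun i => p i + if i ∈ S then 1 else 0) - lyapunov B t p

open Set

section Convexity

lemma ConvexOn.sub_le_sub_of_le {s : Set ℝ} {f : ℝ → ℝ} (hf : ConvexOn ℝ s f) {a b w : ℝ}
    (ha : a ∈ s) (hb : b + w ∈ s) (hab : a ≤ b) (hw : 0 ≤ w) :
    f (a + w) - f a ≤ f (b + w) - f b := by
  rcases hw.eq_or_lt with rfl | hw
  · simp
  have hL : 0 < b + w - a := by linarith
  set μ := w / (b + w - a)
  have hμ : μ ≤ 1 := (div_le_one hL).2 (by linarith)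
  have h₁ := hf.2 ha hb (sub_nonneg.2 hμ) (by positivity) (sub_add_cancel 1 μ)
  have h₂ := hf.2 ha hb (by positivity) (sub_nonneg.2 hμ) (add_sub_cancel μ 1)
  have e₁ : (1 - μ) • a + μ • (b + w) = a + w := by
    simp only [smul_eq_mul, μ]; field_simp; ring
  have e₂ : μ • a + (1 - μ) • (b + w) = b := by
    simp only [smul_eq_mul, μ]; field_simp; ring
  rw [e₁] at h₁
  rw [e₂] at h₂
  simp only [smul_eq_mul] at h₁ h₂
  linarith

lemma ConvexOn.comp_add_smul {E : Type*} [AddCommGroup E] [Module ℝ E] {f : E → ℝ}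
    (hf : ConvexOn ℝ univ f) (x v : E) : ConvexOn ℝ univ fun θ : ℝ => f (x + θ • v) := by
  simpa [Function.comp_def, AffineMap.lineMap_apply, add_comm] using
    hf.comp_affineMap (AffineMap.lineMap x (x + v))

lemma monotone_of_le_of_le_add {g : ℝ → ℝ} {ε : ℝ} (hε : 0 < ε)
    (h : ∀ a b, a ≤ b → b ≤ a + ε → g a ≤ g b) : Monotone g := by
  have key : ∀ k : ℕ, ∀ a b, a ≤ b → b ≤ a + k * ε → g a ≤ g b := by
    intro k
    induction k with
    | zero =>
      intro a b hab hb
      rw [le_antisymm hab (by simpa using hb)]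
    | succ k ih =>
      intro a b hab hb
      rcases le_total b (a + ε) with hb' | hb'
      · exact h a b hab hb'
      · exact (h a (a + ε) (by linarith) le_rfl).trans (ih _ _ hb' (by push_cast at hb; linarith))
  intro a b hab
  obtain ⟨k, hk⟩ := exists_nat_ge ((b - a) / ε)
  exact key k a b hab (by rw [div_le_iff₀ hε] at hk; linarith)

lemma monotone_of_forall_notMem_Ioo {α β : Type*} [LinearOrder α] [Preorder β] {g : α → β}
    (R : Finset α) (h : ∀ a b, a < b → (∀ ρ ∈ R, ρ ∉ Set.Ioo a b) → g a ≤ g b) : Monotone g := by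
  classical
  induction R using Finset.induction_on with
  | empty =>
    intro a b hab
    rcases hab.eq_or_lt with rfl | hlt
    · exact le_rfl
    · exact h a b hlt (by simp)
  | insert ρ R _ ih =>
    refine ih fun a b hab hR => ?_
    by_cases hρ : ρ ∈ Set.Ioo a b
    · refine (h a ρ hρ.1 ?_).trans (h ρ b hρ.2 ?_) <;>
        simp only [Finset.mem_insert, forall_eq_or_imp, Set.mem_Ioo, lt_irrefl, false_and,
          and_false, not_false_eq_true, true_and]
      · exact fun ρ' hρ' h' => hR ρ' hρ' ⟨h'.1, h'.2.trans hρ.2⟩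
      · exact fun ρ' hρ' h' => hR ρ' hρ' ⟨hρ.1.trans h'.1, h'.2⟩
    · refine h a b hab ?_
      simp only [Finset.mem_insert, forall_eq_or_imp]
      exact ⟨hρ, hR⟩

lemma sub_le_sub_of_convexOn_Icc {Y : ℝ → ℝ} {w : ℝ} (hw : 0 < w)
    (hY : ∀ c, ConvexOn ℝ (Icc c (c + w)) Y) {a b : ℝ} (hab : a ≤ b) :
    Y (a + w) - Y a ≤ Y (b + w) - Y b := by
  have hinc : Monotone fun z => Y (z + w / 2) - Y z :=
    monotone_of_le_of_le_add (half_pos hw) fun z z' hz hz' =>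
      (hY z).sub_le_sub_of_le (left_mem_Icc.2 (by linarith)) ⟨by linarith, by linarith⟩ hz
        (by positivity)
  have hsplit : ∀ z, Y (z + w) - Y z =
      (Y (z + w / 2) - Y z) + (Y (z + w / 2 + w / 2) - Y (z + w / 2)) :=
    fun z => by rw [add_assoc, add_halves]; ring
  rw [hsplit, hsplit]
  exact add_le_add (hinc hab) (hinc (by linarith))

lemma sub_le_sub_of_eq_add_on_strip {Φ : ℝ → ℝ → ℝ} (hΦ : ∀ s, ConvexOn ℝ univ (Φ s))
    {X Y : ℝ → ℝ} {r₁ r₂ h : ℝ} (hr : r₁ < r₂) (hh : 0 ≤ h)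
    (hXY : ∀ s σ, s + r₁ ≤ σ → σ ≤ s + r₂ → Φ s σ = X s + Y σ) :
    Φ h (h + r₁) - Φ 0 r₁ ≤ Φ h (h + r₂) - Φ 0 r₂ := by
  have hY : ∀ c, ConvexOn ℝ (Icc c (c + (r₂ - r₁))) Y := fun c =>
    (((hΦ (c - r₁)).subset (subset_univ _) (convex_Icc _ _)).add_const (-X (c - r₁))).congr
      fun σ hσ => by
        simp only [Pi.add_apply]
        rw [hXY _ _ (by linarith [hσ.1]) (by linarith [hσ.2])]
        ring
  have hinc := sub_le_sub_of_convexOn_Icc (sub_pos.2 hr) hY (show r₁ ≤ h + r₁ by linarith)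
  rw [show r₁ + (r₂ - r₁) = r₂ by ring, show h + r₁ + (r₂ - r₁) = h + r₂ by ring] at hinc
  rw [hXY h (h + r₁) le_rfl (by linarith), hXY 0 r₁ (by linarith) (by linarith),
    hXY h (h + r₂) (by linarith) le_rfl, hXY 0 r₂ (by linarith) (by linarith)]
  linarith

end Convexity

section IndirectUtility

def indicatorVec {R : Type*} [Zero R] [One R] (S : Finset (Fin n)) : Fin n → R :=
  fun i => if i ∈ S then 1 else 0

lemma indicatorVec_union_add_inter {R : Type*} [AddMonoidWithOne R] (S T : Finset (Fin n)) :
    (indicatorVec (S ∪ T) + indicatorVec (S ∩ T) : Fin n → R) =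
      indicatorVec S + indicatorVec T := by
  funext i
  by_cases hS : i ∈ S <;> by_cases hT : i ∈ T <;> simp [indicatorVec, hS, hT]

@[simp] lemma surplus_zero (b p : Fin n → ℝ) : surplus b p 0 = 0 := by
  simp [surplus, extVec]

@[simp] lemma surplus_succ (b p : Fin n → ℝ) (i : Fin n) : surplus b p i.succ = b i - p i := by
  simp [surplus, extVec]

lemma surplus_le_maxSurplus (b p : Fin n → ℝ) (j : Fin (n + 1)) :
    surplus b p j ≤ maxSurplus b p :=
  le_sup' _ (mem_univ j)

lemma maxSurplus_antitone (b : Fin n → ℝ) : Antitone (maxSurplus b) := fun p p' h =>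
  sup'_le _ _ fun j _ => le_trans (show surplus b p' j ≤ surplus b p j by
    cases j using Fin.cases with
    | zero => simp
    | succ i => simpa using sub_le_sub_left (h i) (b i)) (surplus_le_maxSurplus b p j)

lemma maxSurplus_add_smul_indicatorVec {b p : Fin n → ℝ} {Q : Finset (Fin n)} {c : ℝ}
    (hc : 0 ≤ c) (hdom : ∀ q ∈ Q, ∃ i ∉ Q, b q - p q ≤ b i - p i) :
    maxSurplus b (p + c • indicatorVec Q) = maxSurplus b p := by
  refine le_antisymm (maxSurplus_antitone b fun i => ?_) (sup'_le _ _ fun j _ => ?_)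
  · by_cases hi : i ∈ Q <;> simp [indicatorVec, hi, hc]
  induction j using Fin.cases with
  | zero => simpa using surplus_le_maxSurplus b (p + c • indicatorVec Q) 0
  | succ i =>
    by_cases hi : i ∈ Q
    · obtain ⟨i', hi', hle⟩ := hdom i hi
      calc surplus b p i.succ ≤ surplus b (p + c • indicatorVec Q) i'.succ := by
            simpa [indicatorVec, hi'] using hle
        _ ≤ _ := surplus_le_maxSurplus b _ _
    · calc surplus b p i.succ = surplus b (p + c • indicatorVec Q) i.succ := by
            simp [indicatorVec, hi]
        _ ≤ _ := surplus_le_maxSurplus b _ _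

lemma indirectUtility_eq_add_on_strip (B : List ((Fin n → ℝ) × ℝ)) (x : Fin n → ℝ)
    {P Q : Finset (Fin n)} (hPQ : Disjoint P Q) {r₁ r₂ : ℝ}
    (hties : ∀ bw ∈ B, ∀ i q, (bw.1 q - x q) - (bw.1 i - x i) ∉ Set.Ioo r₁ r₂) :
    ∃ X Y : ℝ → ℝ, ∀ s σ, s + r₁ ≤ σ → σ ≤ s + r₂ →
      indirectUtility B (x + s • indicatorVec P + σ • indicatorVec Q) = X s + Y σ := by
  classical
  -- bids whose `Q`-goods are beaten by a `P`-good on the whole strip depend on `s` only,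
  -- the others (whose best `Q`-good beats every `P`-good) on `σ` only
  let onlyS (bw : (Fin n → ℝ) × ℝ) : Prop := ∀ q ∈ Q, ∃ i ∈ P, bw.1 q - x q ≤ bw.1 i - x i + r₁
  refine ⟨fun s => (B.map fun bw => if onlyS bw then
      bw.2 * maxSurplus bw.1 (x + s • indicatorVec P + (s + r₁) • indicatorVec Q) else 0).sum,
    fun σ => (B.map fun bw => if onlyS bw then 0 else
      bw.2 * maxSurplus bw.1 (x + (σ - r₂) • indicatorVec P + σ • indicatorVec Q)).sum,
    fun s σ h₁ h₂ => ?_⟩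
  rw [indirectUtility, ← List.sum_map_add]
  refine congrArg List.sum (List.map_congr_left fun bw hbw => ?_)
  by_cases hS : onlyS bw
  · rw [if_pos hS, if_pos hS, add_zero, show x + s • indicatorVec P + σ • indicatorVec Q =
        x + s • indicatorVec P + (s + r₁) • indicatorVec Q + (σ - (s + r₁)) • indicatorVec Q by
        module, maxSurplus_add_smul_indicatorVec (by linarith) fun q hq => ?_]
    obtain ⟨i, hi, hle⟩ := hS q hq
    refine ⟨i, Finset.disjoint_left.1 hPQ hi, ?_⟩
    simp [indicatorVec, hi, hq, Finset.disjoint_left.1 hPQ hi, Finset.disjoint_right.1 hPQ hq]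
    linarith
  · obtain ⟨q, hq, hbeat⟩ : ∃ q ∈ Q, ∀ i ∈ P, bw.1 i - x i + r₁ < bw.1 q - x q := by
      simp only [onlyS] at hS
      push Not at hS
      exact hS
    rw [if_neg hS, if_neg hS, zero_add, show x + s • indicatorVec P + σ • indicatorVec Q =
        x + (σ - r₂) • indicatorVec P + σ • indicatorVec Q + (s - (σ - r₂)) • indicatorVec P by
        module, maxSurplus_add_smul_indicatorVec (by linarith) fun i hi => ?_]
    refine ⟨q, Finset.disjoint_right.1 hPQ hq, ?_⟩
    have hgap : r₂ ≤ (bw.1 q - x q) - (bw.1 i - x i) := by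
      by_contra hlt
      exact hties bw hbw i q ⟨by linarith [hbeat i hi], not_le.1 hlt⟩
    simp [indicatorVec, hi, hq, Finset.disjoint_left.1 hPQ hi, Finset.disjoint_right.1 hPQ hq]
    linarith

theorem indirectUtility_union_add_inter_le {B : List ((Fin n → ℝ) × ℝ)}
    (hconv : ConvexOn ℝ univ (indirectUtility B)) (x : Fin n → ℝ) (S T : Finset (Fin n)) :
    indirectUtility B (x + indicatorVec (S ∪ T)) + indirectUtility B (x + indicatorVec (S ∩ T)) ≤
      indirectUtility B (x + indicatorVec S + indicatorVec T) + indirectUtility B x := by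
  classical
  set P := (S ∪ T) \ (S ∩ T)
  let Φ (s σ : ℝ) : ℝ := indirectUtility B (x + s • indicatorVec P + σ • indicatorVec (S ∩ T))
  let ties : Finset ℝ := B.toFinset.biUnion fun bw =>
    univ.image fun iq : Fin n × Fin n => (bw.1 iq.2 - x iq.2) - (bw.1 iq.1 - x iq.1)
  have hmono : Monotone fun r => Φ 1 (1 + r) - Φ 0 r := by
    refine monotone_of_forall_notMem_Ioo ties fun r₁ r₂ hr hR => ?_
    obtain ⟨X, Y, hXY⟩ := indirectUtility_eq_add_on_strip B x sdiff_disjoint fun bw hbw i q =>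
      hR _ (mem_biUnion.2 ⟨bw, List.mem_toFinset.2 hbw, mem_image.2 ⟨(i, q), mem_univ _, rfl⟩⟩)
    exact sub_le_sub_of_eq_add_on_strip (fun s => hconv.comp_add_smul _ _) hr zero_le_one hXY
  have h := hmono zero_le_one
  obtain ⟨e₁, e₂, e₃, e₄⟩ :
      x + (1 : ℝ) • indicatorVec P + (1 + 0 : ℝ) • indicatorVec (S ∩ T) = x + indicatorVec (S ∪ T) ∧
      x + (0 : ℝ) • indicatorVec P + (0 : ℝ) • indicatorVec (S ∩ T) = x ∧
      x + (1 : ℝ) • indicatorVec P + (1 + 1 : ℝ) • indicatorVec (S ∩ T) =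
        x + indicatorVec S + indicatorVec T ∧
      x + (0 : ℝ) • indicatorVec P + (1 : ℝ) • indicatorVec (S ∩ T) = x + indicatorVec (S ∩ T) := by
    refine ⟨?_, ?_, ?_, ?_⟩ <;> funext i <;> by_cases hS : i ∈ S <;> by_cases hT : i ∈ T <;>
      simp [P, indicatorVec, hS, hT, add_assoc, one_add_one_eq_two]
  dsimp only [Φ] at h
  rw [e₁, e₂, e₃, e₄] at h
  linarith

section Lyapunov

def lyapunovReal (B : List ((Fin n → ℝ) × ℝ)) (t : Fin n → ℤ) (x : Fin n → ℝ) : ℝ :=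
  indirectUtility B x + ∑ i, (t i : ℝ) * x i

variable {B : List ((Fin n → ℝ) × ℝ)} (t : Fin n → ℤ)

lemma lyapunov_eq_lyapunovReal (p : Fin n → ℤ) :
    lyapunov B t p = lyapunovReal B t fun i => (p i : ℝ) :=
  rfl

lemma descSlope_eq (p : Fin n → ℤ) (S : Finset (Fin n)) :
    descSlope B t p S = lyapunov B t (p + indicatorVec S) - lyapunov B t p :=
  rfl

lemma cast_add_indicatorVec (p : Fin n → ℤ) (S : Finset (Fin n)) :
    (fun i => ((p + indicatorVec S : Fin n → ℤ) i : ℝ)) =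
      (fun i => (p i : ℝ)) + indicatorVec S := by
  funext i
  by_cases hi : i ∈ S <;> simp [indicatorVec, hi]

lemma cast_add_nsmul_indicatorVec (p : Fin n → ℤ) (k : ℕ) (S : Finset (Fin n)) :
    (fun i => ((p + k • indicatorVec S : Fin n → ℤ) i : ℝ)) =
      (fun i => (p i : ℝ)) + (k : ℝ) • indicatorVec S := by
  funext i
  by_cases hi : i ∈ S <;> simp [indicatorVec, hi]

variable (hconv : ConvexOn ℝ univ (indirectUtility B))
include hconv

lemma convexOn_lyapunovReal : ConvexOn ℝ univ (lyapunovReal B t) :=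
  hconv.add ⟨convex_univ, fun x _ y _ a b _ _ _ => le_of_eq <| by
    simp only [Pi.add_apply, Pi.smul_apply, smul_eq_mul, Finset.mul_sum, ← Finset.sum_add_distrib]
    exact Finset.sum_congr rfl fun i _ => by ring⟩

lemma lyapunovReal_union_add_inter_le (x : Fin n → ℝ) (S T : Finset (Fin n)) :
    lyapunovReal B t (x + indicatorVec (S ∪ T)) + lyapunovReal B t (x + indicatorVec (S ∩ T)) ≤
      lyapunovReal B t (x + indicatorVec S + indicatorVec T) + lyapunovReal B t x := by
  have hlin : ∑ i, (t i : ℝ) * (x + indicatorVec (S ∪ T) : Fin n → ℝ) i +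
      ∑ i, (t i : ℝ) * (x + indicatorVec (S ∩ T) : Fin n → ℝ) i =
      ∑ i, (t i : ℝ) * (x + indicatorVec S + indicatorVec T : Fin n → ℝ) i +
        ∑ i, (t i : ℝ) * x i := by
    rw [← Finset.sum_add_distrib, ← Finset.sum_add_distrib]
    refine Finset.sum_congr rfl fun i _ => ?_
    have := congrFun (indicatorVec_union_add_inter (R := ℝ) S T) i
    simp only [Pi.add_apply] at this ⊢
    linear_combination (t i : ℝ) * this
  unfold lyapunovReal
  linarith [indirectUtility_union_add_inter_le hconv x S T]

lemma lyapunov_union_add_inter_le (p : Fin n → ℤ) (S T : Finset (Fin n)) :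
    lyapunov B t (p + indicatorVec (S ∪ T)) + lyapunov B t (p + indicatorVec (S ∩ T)) ≤
      lyapunov B t (p + indicatorVec S + indicatorVec T) + lyapunov B t p := by
  simp only [lyapunov_eq_lyapunovReal, cast_add_indicatorVec]
  exact lyapunovReal_union_add_inter_le t hconv _ S T

lemma descSlope_add_nsmul_monotone (p : Fin n → ℤ) (S : Finset (Fin n)) :
    Monotone fun k : ℕ => descSlope B t (p + k • indicatorVec S) S := by
  set L := fun θ : ℝ => lyapunovReal B t ((fun i => (p i : ℝ)) + θ • indicatorVec S)
  have hL : ConvexOn ℝ univ L := (convexOn_lyapunovReal t hconv).comp_add_smul _ _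
  have hslope : ∀ k : ℕ, descSlope B t (p + k • indicatorVec S) S = L (k + 1) - L k := by
    intro k
    rw [descSlope_eq, add_assoc, ← succ_nsmul, lyapunov_eq_lyapunovReal,
      lyapunov_eq_lyapunovReal, cast_add_nsmul_indicatorVec, cast_add_nsmul_indicatorVec]
    push_cast
    rfl
  intro k l hkl
  simp only [hslope]
  exact hL.sub_le_sub_of_le (mem_univ _) (mem_univ _) (Nat.cast_le.2 hkl) zero_le_one

end Lyapunov

section SteepestDescent

def IsMinimalSteepestDescent (B : List ((Fin n → ℝ) × ℝ)) (t p : Fin n → ℤ)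
    (S₀ : Finset (Fin n)) : Prop :=
  ∀ S, descSlope B t p S₀ ≤ descSlope B t p S ∧ (¬S₀ ⊆ S → descSlope B t p S₀ < descSlope B t p S)

variable {B : List ((Fin n → ℝ) × ℝ)} {t p : Fin n → ℤ} {S₀ : Finset (Fin n)}

lemma isMinimalSteepestDescent_iff :
    IsMinimalSteepestDescent B t p S₀ ↔ (∀ S, descSlope B t p S₀ ≤ descSlope B t p S) ∧
      ∀ S, (∀ T, descSlope B t p S ≤ descSlope B t p T) → S₀ ⊆ S := by
  refine ⟨fun h => ⟨fun S => (h S).1, fun S hS => ?_⟩, fun ⟨hmin, hminimal⟩ S => ⟨hmin S, ?_⟩⟩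
  · by_contra hsub
    exact (hS S₀).not_gt ((h S).2 hsub)
  · intro hsub
    refine (hmin S).lt_of_ne fun heq => hsub (hminimal S fun T => ?_)
    exact heq ▸ hmin T

lemma IsMinimalSteepestDescent.add_indicatorVec (hconv : ConvexOn ℝ univ (indirectUtility B))
    (h : IsMinimalSteepestDescent B t p S₀)
    (hslope : descSlope B t (p + indicatorVec S₀) S₀ = descSlope B t p S₀) :
    IsMinimalSteepestDescent B t (p + indicatorVec S₀) S₀ := by
  intro S
  have hsub := lyapunov_union_add_inter_le t hconv p S S₀
  rw [add_right_comm] at hsub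
  have hU := (h (S ∪ S₀)).1
  obtain ⟨hI, hI'⟩ := h (S ∩ S₀)
  rw [hslope]
  simp only [descSlope_eq] at hU hI hI' ⊢
  exact ⟨by linarith, fun hS => by linarith [hI' fun h' => hS (h'.trans inter_subset_left)]⟩

end SteepestDescent

theorem stmt18_general (n : ℕ) (B : List ((Fin n → ℝ) × ℝ))
    (hconv : ConvexOn ℝ Set.univ (indirectUtility B))
    (t : Fin n → ℤ) (p : Fin n → ℤ) (S₀ : Finset (Fin n))
    (hmin : ∀ S : Finset (Fin n), descSlope B t p S₀ ≤ descSlope B t p S)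
    (hminimal : ∀ S : Finset (Fin n),
      (∀ T : Finset (Fin n), descSlope B t p S ≤ descSlope B t p T) → S₀ ⊆ S)
    (lam : ℤ) (hlam : 1 ≤ lam)
    (heq : descSlope B t (fun i => p i + (lam - 1) * if i ∈ S₀ then 1 else 0) S₀ =
      descSlope B t p S₀) :
    (∀ S : Finset (Fin n),
      descSlope B t (fun i => p i + (lam - 1) * if i ∈ S₀ then 1 else 0) S₀ ≤
        descSlope B t (fun i => p i + (lam - 1) * if i ∈ S₀ then 1 else 0) S) ∧
    (∀ S : Finset (Fin n),
      (∀ T : Finset (Fin n),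
        descSlope B t (fun i => p i + (lam - 1) * if i ∈ S₀ then 1 else 0) S ≤
          descSlope B t (fun i => p i + (lam - 1) * if i ∈ S₀ then 1 else 0) T) →
      S₀ ⊆ S) := by
  obtain ⟨N, rfl⟩ : ∃ N : ℕ, lam = N + 1 := ⟨(lam - 1).toNat, by omega⟩
  have hpN : (fun i => p i + ((N : ℤ) + 1 - 1) * if i ∈ S₀ then 1 else 0) =
      p + N • indicatorVec S₀ := by
    funext i
    simp [indicatorVec]
  rw [hpN] at heq ⊢
  have hmono := descSlope_add_nsmul_monotone t hconv p S₀
  have hconst : ∀ k ≤ N, descSlope B t (p + k • indicatorVec S₀) S₀ = descSlope B t p S₀ :=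
    fun k hk => le_antisymm ((hmono hk).trans heq.le) (by simpa using hmono (Nat.zero_le k))
  have hpk : ∀ k ≤ N, IsMinimalSteepestDescent B t (p + k • indicatorVec S₀) S₀ := by
    intro k hk
    induction k with
    | zero => simpa using isMinimalSteepestDescent_iff.2 ⟨hmin, hminimal⟩
    | succ k ih =>
      rw [succ_nsmul, ← add_assoc]
      refine (ih (by omega)).add_indicatorVec hconv ?_
      rw [add_assoc, ← succ_nsmul, hconst _ hk, hconst k (by omega)]
  exact isMinimalSteepestDescent_iff.1 (hpk N le_rfl)

/-- Let `B` be a bid list with convex indirect utility function, `t ∈ ℤ^n`,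
`g` the Lyapunov function and `g'(p;S) = g(p + e^S) − g(p)`. Suppose `S₀` is a minimiser of
`S ↦ g'(p;S)` contained in every minimiser, and let `λ ≥ 1` be an integer with
`g'(p + (λ−1)·e^{S₀}; S₀) = g'(p; S₀)`. Then `S₀` is a minimiser of
`S ↦ g'(p + (λ−1)·e^{S₀}; S)` contained in every minimiser of that map: `S₀` is also the
inclusion-wise minimal steepest descent direction at `p + (λ−1)·e^{S₀}`. -/
theorem stmt18 (n : ℕ) (hn : 1 ≤ n) (B : List ((Fin n → ℝ) × ℝ))
    (hw : ∀ bw ∈ B, bw.2 = 1 ∨ bw.2 = -1)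
    (hconv : ConvexOn ℝ Set.univ (indirectUtility B))
    (t : Fin n → ℤ) (p : Fin n → ℤ) (S₀ : Finset (Fin n))
    (hmin : ∀ S : Finset (Fin n), descSlope B t p S₀ ≤ descSlope B t p S)
    (hminimal : ∀ S : Finset (Fin n),
      (∀ T : Finset (Fin n), descSlope B t p S ≤ descSlope B t p T) → S₀ ⊆ S)
    (lam : ℤ) (hlam : 1 ≤ lam)
    (heq : descSlope B t (fun i => p i + (lam - 1) * if i ∈ S₀ then 1 else 0) S₀ =
      descSlope B t p S₀) :
    (∀ S : Finset (Fin n),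
      descSlope B t (fun i => p i + (lam - 1) * if i ∈ S₀ then 1 else 0) S₀ ≤
        descSlope B t (fun i => p i + (lam - 1) * if i ∈ S₀ then 1 else 0) S) ∧
    (∀ S : Finset (Fin n),
      (∀ T : Finset (Fin n),
        descSlope B t (fun i => p i + (lam - 1) * if i ∈ S₀ then 1 else 0) S ≤
          descSlope B t (fun i => p i + (lam - 1) * if i ∈ S₀ then 1 else 0) T) →
      S₀ ⊆ S) :=
  stmt18_general n B hconv t p S₀ hmin hminimal lam hlam heq
end IndirectUtility
end
end
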